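/- arXiv:0712.3920 — 2 statements merged into one kernel-verified Lean document; each statement's English description precedes it below -/
import Mathlib

section
/- Let d ≥ 1, let 𝒢 ⊆ L²(ℝ^d; ℝ^d) be the closure of the set of gradients {∇φ : φ a Schwartz function on ℝ^d}, and let Π denote the orthogonal projection of L²(ℝ^d; ℝ^d) onto 𝒢. Let a ∈ L^∞(ℝ^d; ℝ) with ‖a‖_{L^∞} < 1, let W ∈ L²(ℝ^d; ℝ^d), and let 𝔔[a]W = Σ_{n=0}^{∞} (−1)ⁿ (Π(a·Π ·))ⁿ (ΠW). Then V := 𝔔[a]W is the unique element of L²(ℝ^d; ℝ^d) satisfying both (i) ΠV = V, and (ii) ∫_{ℝ^d} (1 + a) V · ∇φ = ∫_{ℝ^d} W · ∇φ for every Schwartz function φ on ℝ^d (i.e., ∇·((1+a)V) = ∇·W in the sense of distributions). -/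
/-!
Write `M` for multiplication by `a`. For `V` in the range of `Π`, the weak equation
`∇·((1+a)V) = ∇·W` says that `V + M V - W` is orthogonal to all gradients, i.e. that
`Π(V + M V - W) = 0`, i.e. that `V + T V = Π W` with `T = Π M Π`. Since `Π` is a contraction and
`|a| ≤ C < 1`, `‖T‖ ≤ C < 1`, so `1 + T` is invertible with inverse the Neumann series
`∑ (-T)ⁿ`; this gives existence, the series formula and uniqueness at once.
-/

open MeasureTheory Real RealInnerProductSpace

/-- The `L²(ℝ^d; ℝ^d)` space of vector fields. -/
noncomputable abbrev L2Vec (d : ℕ) :=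
  MeasureTheory.Lp (EuclideanSpace ℝ (Fin d)) 2
    (volume : MeasureTheory.Measure (EuclideanSpace ℝ (Fin d)))

theorem exists_hasSum_neumann_series {𝕜 E : Type*} [NontriviallyNormedField 𝕜]
    [NormedAddCommGroup E] [NormedSpace 𝕜 E] [CompleteSpace E]
    (T : E →L[𝕜] E) (hT : ‖T‖ < 1) (w : E) :
    ∃ V, HasSum (fun n : ℕ => (-1 : 𝕜) ^ n • T^[n] w) V ∧ ∀ V', V' + T V' = w ↔ V' = V := by
  have hnegT : ‖-T‖ < 1 := by rwa [norm_neg]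
  set U := Units.oneSub (-T) hnegT
  have hU : ∀ v, (U : E →L[𝕜] E) v = v + T v := fun v => by simp [U]
  refine ⟨(↑U⁻¹ : E →L[𝕜] E) w, ?_, fun V' => ?_⟩
  · convert (summable_geometric_of_norm_lt_one hnegT).hasSum.mapL
      (ContinuousLinearMap.apply 𝕜 E w) using 1
    · ext n
      rw [ContinuousLinearMap.apply_apply, ← neg_one_smul 𝕜 T, smul_pow,
        smul_apply, FunLike.coe_pow_eq_iterate]
    · rfl
  · rw [← hU]
    constructor
    · rintro rfl
      rw [← mul_apply_eq_comp, Units.inv_mul, one_apply_eq_self]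
    · rintro rfl
      rw [← mul_apply_eq_comp, Units.mul_inv, one_apply_eq_self]

section OrthogonalProjection

variable {H : Type*} [NormedAddCommGroup H] [InnerProductSpace ℝ H] {S : Set H} {P : H → H}

theorem norm_map_le_of_forall_inner_sub_eq_zero (hPmem : ∀ x, P x ∈ closure S)
    (hPorth : ∀ x, ∀ g ∈ closure S, ⟪x - P x, g⟫ = (0 : ℝ)) (x : H) : ‖P x‖ ≤ ‖x‖ := by
  have hpyth := norm_add_sq_eq_norm_sq_add_norm_sq_real (hPorth x (P x) (hPmem x))
  rw [sub_add_cancel] at hpyth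
  exact le_of_sq_le_sq (by nlinarith [sq_nonneg ‖x - P x‖]) (norm_nonneg x)

theorem map_eq_zero_iff_forall_inner_eq_zero (hPmem : ∀ x, P x ∈ closure S)
    (hPorth : ∀ x, ∀ g ∈ closure S, ⟪x - P x, g⟫ = (0 : ℝ)) (x : H) :
    P x = 0 ↔ ∀ g ∈ S, ⟪x, g⟫ = (0 : ℝ) := by
  constructor
  · intro hPx g hg
    simpa [hPx] using hPorth x g (subset_closure hg)
  · intro hx
    have hclosure : closure S ⊆ {g | ⟪x, g⟫ = (0 : ℝ)} :=
      closure_minimal hx (isClosed_eq (innerSL ℝ x).continuous continuous_const)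
    have hPx : ⟪P x, P x⟫ = (0 : ℝ) := by
      have := hPorth x (P x) (hPmem x)
      rwa [inner_sub_left, hclosure (hPmem x), zero_sub, neg_eq_zero] at this
    exact inner_self_eq_zero.1 hPx

end OrthogonalProjection

theorem Lp.norm_le_of_ae_eq_smul {α E : Type*} [MeasurableSpace α] {μ : Measure α}
    [NormedAddCommGroup E] [NormedSpace ℝ E] {p : ENNReal} {a : α → ℝ} {C : ℝ}
    (ha : ∀ᵐ x ∂μ, |a x| ≤ C) {u v : Lp E p μ} (hv : v =ᵐ[μ] fun x => a x • u x) :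
    ‖v‖ ≤ C * ‖u‖ := by
  refine Lp.norm_le_mul_norm_of_ae_le_mul ?_
  filter_upwards [hv, ha] with x hvx hax
  rw [hvx, norm_smul, Real.norm_eq_abs]
  exact mul_le_mul_of_nonneg_right hax (norm_nonneg _)

theorem SchwartzMap.memLp_gradient {E : Type*} [NormedAddCommGroup E] [InnerProductSpace ℝ E]
    [CompleteSpace E] [SecondCountableTopology E] [MeasurableSpace E] [BorelSpace E]
    (φ : SchwartzMap E ℝ) (p : ENNReal) (μ : Measure E) [μ.HasTemperateGrowth] :
    MemLp (gradient (⇑φ)) p μ :=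
  ((SchwartzMap.fderivCLM ℝ E ℝ φ).memLp p μ).continuousLinearMap_comp
    (InnerProductSpace.toDual ℝ E).symm.toContinuousLinearEquiv.toContinuousLinearMap

noncomputable def gradL2 (d : ℕ) (φ : SchwartzMap (EuclideanSpace ℝ (Fin d)) ℝ) : L2Vec d :=
  (φ.memLp_gradient 2 volume).toLp (gradient (⇑φ))

theorem coeFn_gradL2 (d : ℕ) (φ : SchwartzMap (EuclideanSpace ℝ (Fin d)) ℝ) :
    ⇑(gradL2 d φ) =ᵐ[volume] gradient (⇑φ) :=
  (φ.memLp_gradient 2 volume).coeFn_toLp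

theorem setOf_ae_eq_gradient_eq_range_gradL2 (d : ℕ) :
    {u : L2Vec d | ∃ φ : SchwartzMap (EuclideanSpace ℝ (Fin d)) ℝ,
      ∀ᵐ X : EuclideanSpace ℝ (Fin d), u X = gradient (⇑φ) X} = Set.range (gradL2 d) := by
  ext u
  constructor
  · rintro ⟨φ, hφ⟩
    exact ⟨φ, Lp.ext ((coeFn_gradL2 d φ).trans (hφ.mono fun X h => h.symm))⟩
  · rintro ⟨φ, rfl⟩
    exact ⟨φ, coeFn_gradL2 d φ⟩

theorem integral_inner_gradient_eq_inner_gradL2 {d : ℕ} (u : L2Vec d)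
    (φ : SchwartzMap (EuclideanSpace ℝ (Fin d)) ℝ) :
    ∫ X, ⟪u X, gradient (⇑φ) X⟫ = ⟪u, gradL2 d φ⟫ := by
  rw [L2.inner_def]
  refine integral_congr_ae ?_
  filter_upwards [coeFn_gradL2 d φ] with X hX
  rw [hX]

theorem integral_one_add_mul_inner_gradient_eq {d : ℕ} {a : EuclideanSpace ℝ (Fin d) → ℝ}
    {u v : L2Vec d} (hv : v =ᵐ[volume] fun X => a X • u X)
    (φ : SchwartzMap (EuclideanSpace ℝ (Fin d)) ℝ) :
    ∫ X, (1 + a X) * ⟪u X, gradient (⇑φ) X⟫ = ⟪u + v, gradL2 d φ⟫ := by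
  rw [← integral_inner_gradient_eq_inner_gradL2]
  refine integral_congr_ae ?_
  filter_upwards [hv, Lp.coeFn_add u v] with X hvX hadd
  rw [hadd, Pi.add_apply, hvX, inner_add_left, real_inner_smul_left]
  ring

theorem weak_div_eq_iff {d : ℕ} {P : L2Vec d →L[ℝ] L2Vec d}
    (hker : ∀ x, P x = 0 ↔ ∀ φ, ⟪x, gradL2 d φ⟫ = (0 : ℝ))
    {a : EuclideanSpace ℝ (Fin d) → ℝ} {V Wv : L2Vec d} (hPV : P V = V)
    (hWv : Wv =ᵐ[volume] fun X => a X • V X) (W : L2Vec d) :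
    (∀ φ : SchwartzMap (EuclideanSpace ℝ (Fin d)) ℝ,
      ∫ X, (1 + a X) * ⟪V X, gradient (⇑φ) X⟫ = ∫ X, ⟪W X, gradient (⇑φ) X⟫) ↔
      V + P Wv = P W := by
  calc _ ↔ ∀ φ, ⟪V + Wv - W, gradL2 d φ⟫ = (0 : ℝ) := by
        simp only [integral_one_add_mul_inner_gradient_eq hWv,
          integral_inner_gradient_eq_inner_gradL2, inner_sub_left, sub_eq_zero]
    _ ↔ P (V + Wv - W) = 0 := (hker _).symm
    _ ↔ V + P Wv = P W := by rw [map_sub, map_add, hPV, sub_eq_zero]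

theorem Q_operator_solves_div_equation_general (d : ℕ)
    (G₀ : Set (L2Vec d))
    (hG₀ : G₀ = {u : L2Vec d | ∃ φ : SchwartzMap (EuclideanSpace ℝ (Fin d)) ℝ,
      ∀ᵐ X : EuclideanSpace ℝ (Fin d), u X = gradient (⇑φ) X})
    (P : L2Vec d →L[ℝ] L2Vec d)
    (hPmem : ∀ U : L2Vec d, P U ∈ closure G₀)
    (hPid : ∀ U ∈ closure G₀, P U = U)
    (hPorth : ∀ U : L2Vec d, ∀ g ∈ closure G₀, ⟪U - P U, g⟫ = (0 : ℝ))
    (a : EuclideanSpace ℝ (Fin d) → ℝ)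
    (C : ℝ) (hC0 : 0 ≤ C) (hC1 : C < 1)
    (ha : ∀ᵐ X : EuclideanSpace ℝ (Fin d), |a X| ≤ C)
    (T : L2Vec d →L[ℝ] L2Vec d)
    (hT : ∀ U : L2Vec d, ∃ W : L2Vec d,
      (⇑W =ᵐ[volume] fun X => a X • (P U) X) ∧ T U = P W)
    (W : L2Vec d) :
    ∃ V : L2Vec d,
      HasSum (fun n : ℕ => (-1 : ℝ) ^ n • (⇑T)^[n] (P W)) V ∧
      P V = V ∧
      (∀ φ : SchwartzMap (EuclideanSpace ℝ (Fin d)) ℝ,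
        ∫ X : EuclideanSpace ℝ (Fin d), (1 + a X) * ⟪V X, gradient (⇑φ) X⟫
          = ∫ X : EuclideanSpace ℝ (Fin d), ⟪W X, gradient (⇑φ) X⟫) ∧
      ∀ V' : L2Vec d, P V' = V' →
        (∀ φ : SchwartzMap (EuclideanSpace ℝ (Fin d)) ℝ,
          ∫ X : EuclideanSpace ℝ (Fin d), (1 + a X) * ⟪V' X, gradient (⇑φ) X⟫
            = ∫ X : EuclideanSpace ℝ (Fin d), ⟪W X, gradient (⇑φ) X⟫) →
        V' = V := by
  subst hG₀
  rw [setOf_ae_eq_gradient_eq_range_gradL2] at hPmem hPid hPorth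
  have hker : ∀ x, P x = 0 ↔ ∀ φ, ⟪x, gradL2 d φ⟫ = (0 : ℝ) := fun x =>
    (map_eq_zero_iff_forall_inner_eq_zero hPmem hPorth x).trans Set.forall_mem_range
  have hweak : ∀ V, P V = V → ((∀ φ : SchwartzMap (EuclideanSpace ℝ (Fin d)) ℝ,
      ∫ X, (1 + a X) * ⟪V X, gradient (⇑φ) X⟫ = ∫ X, ⟪W X, gradient (⇑φ) X⟫) ↔
        V + T V = P W) := by
    intro V hPV
    obtain ⟨Wv, hWv, hTV⟩ := hT V
    rw [hTV]
    exact weak_div_eq_iff hker hPV (hPV ▸ hWv) W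
  have hTnorm : ‖T‖ ≤ C := T.opNorm_le_bound hC0 fun U => by
    obtain ⟨WU, hWU, hTU⟩ := hT U
    calc ‖T U‖ = ‖P WU‖ := by rw [hTU]
      _ ≤ ‖WU‖ := norm_map_le_of_forall_inner_sub_eq_zero hPmem hPorth WU
      _ ≤ C * ‖P U‖ := Lp.norm_le_of_ae_eq_smul ha hWU
      _ ≤ C * ‖U‖ := by
        gcongr; exact norm_map_le_of_forall_inner_sub_eq_zero hPmem hPorth U
  obtain ⟨V, hsum, hsol⟩ := exists_hasSum_neumann_series T (hTnorm.trans_lt hC1) (P W)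
  have hPV : P V = V := by
    obtain ⟨Wv, -, hTV⟩ := hT V
    have hV : V = P (W - Wv) := by rw [map_sub, ← hTV, eq_sub_iff_add_eq, (hsol V).2 rfl]
    rw [hV]
    exact hPid _ (hPmem _)
  exact ⟨V, hsum, hPV, (hweak V hPV).2 ((hsol V).2 rfl),
    fun V' hPV' hV' => (hsol V').1 ((hweak V' hPV').1 hV')⟩

/-- with `Π` the orthogonal projection onto the closure `𝒢` of gradients of
Schwartz functions, `a ∈ L^∞` with `‖a‖_∞ ≤ C < 1`, and `T(U) = Π(a·ΠU)`, the sum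
`V = 𝔔[a]W = Σ (-1)ⁿ Tⁿ(ΠW)` is the unique element of `L²(ℝ^d;ℝ^d)` satisfying
`ΠV = V` and `∇·((1+a)V) = ∇·W` in the sense of distributions. -/
theorem Q_operator_solves_div_equation (d : ℕ) (hd : 1 ≤ d)
    (G₀ : Set (L2Vec d))
    (hG₀ : G₀ = {u : L2Vec d | ∃ φ : SchwartzMap (EuclideanSpace ℝ (Fin d)) ℝ,
      ∀ᵐ X : EuclideanSpace ℝ (Fin d), u X = gradient (⇑φ) X})
    (P : L2Vec d →L[ℝ] L2Vec d)
    (hPmem : ∀ U : L2Vec d, P U ∈ closure G₀)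
    (hPid : ∀ U ∈ closure G₀, P U = U)
    (hPorth : ∀ U : L2Vec d, ∀ g ∈ closure G₀, ⟪U - P U, g⟫ = (0 : ℝ))
    (a : EuclideanSpace ℝ (Fin d) → ℝ)
    (ham : AEStronglyMeasurable a (volume : MeasureTheory.Measure (EuclideanSpace ℝ (Fin d))))
    (C : ℝ) (hC0 : 0 ≤ C) (hC1 : C < 1)
    (ha : ∀ᵐ X : EuclideanSpace ℝ (Fin d), |a X| ≤ C)
    (T : L2Vec d →L[ℝ] L2Vec d)
    (hT : ∀ U : L2Vec d, ∃ W : L2Vec d,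
      (⇑W =ᵐ[volume] fun X => a X • (P U) X) ∧ T U = P W)
    (W : L2Vec d) :
    ∃ V : L2Vec d,
      HasSum (fun n : ℕ => (-1 : ℝ) ^ n • (⇑T)^[n] (P W)) V ∧
      P V = V ∧
      (∀ φ : SchwartzMap (EuclideanSpace ℝ (Fin d)) ℝ,
        ∫ X : EuclideanSpace ℝ (Fin d), (1 + a X) * ⟪V X, gradient (⇑φ) X⟫
          = ∫ X : EuclideanSpace ℝ (Fin d), ⟪W X, gradient (⇑φ) X⟫) ∧
      ∀ V' : L2Vec d, P V' = V' →
        (∀ φ : SchwartzMap (EuclideanSpace ℝ (Fin d)) ℝ,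
          ∫ X : EuclideanSpace ℝ (Fin d), (1 + a X) * ⟪V' X, gradient (⇑φ) X⟫
            = ∫ X : EuclideanSpace ℝ (Fin d), ⟪W X, gradient (⇑φ) X⟫) →
        V' = V :=
  Q_operator_solves_div_equation_general d G₀ hG₀ P hPmem hPid hPorth a C hC0 hC1 ha T hT W
end

section
/- Let d ≥ 1, μ₂ > 0, let ζ : ℝ^d → ℝ be of class C², and let Φ : ℝ^d × I → ℝ (I an open interval) be of class C³ and satisfy μ₂ Δ_X Φ + ∂_z² Φ = 0. Define the (d+1)×(d+1) matrix field Q₁(X,z) with upper-left d×d block ζ(X) I_{d×d}, upper-right column −√μ₂ (z+1) ∇ζ(X), lower-left row −√μ₂ (z+1) ∇ζ(X)^T, and lower-right entry −ζ(X). Then, pointwise on ℝ^d × I, ∇^{μ₂}_{X,z} · (Q₁ ∇^{μ₂}_{X,z} Φ) = −(μ₂ Δ_X + ∂_z²)[(z+1) ζ(X) ∂_zΦ], where ∇^{μ₂}_{X,z} = (√μ₂ ∇_X^T, ∂_z)^T denotes the scaled full gradient. -/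
/-!
Expand both sides by the product rule. The terms containing first and second derivatives of
`ζ` cancel between `∇^μ·(Q₁∇^μΦ)` and `Δ^μ[(z+1)ζ∂_zΦ]`, and, once third derivatives of `Φ`
are commuted, their sum collapses to `ζ Δ^μΦ + (z+1) ζ ∂_z(Δ^μΦ)`. Both terms vanish because
`Δ^μΦ = 0` on an open set.
-/

open Real Set

/-- Horizontal partial derivative in the `i`-th direction of a function of
`(X, z) ∈ ℝ^d × ℝ`. -/
noncomputable def pdX {d : ℕ} (i : Fin d) (f : (Fin d → ℝ) × ℝ → ℝ) :
    (Fin d → ℝ) × ℝ → ℝ :=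
  fun p => fderiv ℝ f p (Pi.single i 1, 0)

/-- Vertical partial derivative of a function of `(X, z) ∈ ℝ^d × ℝ`. -/
noncomputable def pdZ {d : ℕ} (f : (Fin d → ℝ) × ℝ → ℝ) :
    (Fin d → ℝ) × ℝ → ℝ :=
  fun p => fderiv ℝ f p (0, 1)

open Filter Topology

section FDerivApply

variable {𝕜 : Type*} [NontriviallyNormedField 𝕜] {E : Type*} [NormedAddCommGroup E]
  [NormedSpace 𝕜 E] {f g : E → 𝕜} {x v : E}

theorem fderiv_fun_mul_apply (hf : DifferentiableAt 𝕜 f x) (hg : DifferentiableAt 𝕜 g x) :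
    fderiv 𝕜 (fun y => f y * g y) x v = fderiv 𝕜 f x v * g x + f x * fderiv 𝕜 g x v := by
  rw [fderiv_fun_mul hf hg]
  simp only [add_apply, smul_apply, smul_eq_mul]
  ring

theorem fderiv_fun_add_apply (hf : DifferentiableAt 𝕜 f x) (hg : DifferentiableAt 𝕜 g x) :
    fderiv 𝕜 (fun y => f y + g y) x v = fderiv 𝕜 f x v + fderiv 𝕜 g x v := by
  rw [fderiv_fun_add hf hg]
  rfl

theorem fderiv_fun_neg_apply : fderiv 𝕜 (fun y => -f y) x v = -fderiv 𝕜 f x v := by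
  rw [fderiv_fun_neg]
  rfl

theorem fderiv_const_mul_apply (hf : DifferentiableAt 𝕜 f x) (c : 𝕜) :
    fderiv 𝕜 (fun y => c * f y) x v = c * fderiv 𝕜 f x v := by
  rw [fderiv_const_mul hf]
  rfl

theorem fderiv_fun_sum_apply {ι : Type*} {s : Finset ι} {f : ι → E → 𝕜}
    (hf : ∀ i ∈ s, DifferentiableAt 𝕜 (f i) x) :
    fderiv 𝕜 (fun y => ∑ i ∈ s, f i y) x v = ∑ i ∈ s, fderiv 𝕜 (f i) x v := by
  rw [fderiv_fun_sum hf]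
  simp

end FDerivApply

section Prod

variable {𝕜 : Type*} [NontriviallyNormedField 𝕜] {E F G : Type*} [NormedAddCommGroup E]
  [NormedSpace 𝕜 E] [NormedAddCommGroup F] [NormedSpace 𝕜 F] [NormedAddCommGroup G]
  [NormedSpace 𝕜 G] {g : E → G} {p v : E × F}

theorem fderiv_comp_fst_apply (hg : DifferentiableAt 𝕜 g p.1) :
    fderiv 𝕜 (fun x : E × F => g x.1) p v = fderiv 𝕜 g p.1 v.1 := by
  rw [show (fun x : E × F => g x.1) = g ∘ Prod.fst from rfl,
    fderiv_comp p hg differentiableAt_fst]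
  simp [fderiv_fst]

theorem fderiv_fderiv_comp_fst_apply {w : E} (hg : DifferentiableAt 𝕜 (fderiv 𝕜 g) p.1) :
    fderiv 𝕜 (fun x : E × F => fderiv 𝕜 g x.1 w) p v = fderiv 𝕜 (fderiv 𝕜 g) p.1 v.1 w := by
  rw [fderiv_comp_fst_apply (g := fun y => fderiv 𝕜 g y w) (by fun_prop),
    fderiv_clm_apply hg (differentiableAt_const w)]
  simp

theorem fderiv_snd_apply : fderiv 𝕜 (fun x : E × F => x.2) p v = v.2 := by
  rw [fderiv_snd]
  rfl

end Prod

section Symmetry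

variable {𝕜 : Type*} [RCLike 𝕜] {E F : Type*} [NormedAddCommGroup E] [NormedSpace 𝕜 E]
  [NormedAddCommGroup F] [NormedSpace 𝕜 F] {f : E → F} {x : E}

theorem ContDiffAt.contDiffAt_fderiv_apply {n : ℕ} (hf : ContDiffAt 𝕜 (n + 1) f x) (v : E) :
    ContDiffAt 𝕜 n (fun y => fderiv 𝕜 f y v) x :=
  (hf.fderiv_right le_rfl).clm_apply contDiffAt_const

theorem ContDiffAt.differentiableAt_fderiv_apply (hf : ContDiffAt 𝕜 2 f x) (v : E) :
    DifferentiableAt 𝕜 (fun y => fderiv 𝕜 f y v) x :=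
  (hf.contDiffAt_fderiv_apply (n := 1) v).differentiableAt one_ne_zero

theorem ContDiffAt.differentiableAt_fderiv_fderiv_apply (hf : ContDiffAt 𝕜 3 f x) (v w : E) :
    DifferentiableAt 𝕜 (fun y => fderiv 𝕜 (fun z => fderiv 𝕜 f z v) y w) x :=
  (hf.contDiffAt_fderiv_apply (n := 2) v).differentiableAt_fderiv_apply w

theorem ContDiffAt.fderiv_fderiv_apply_comm (hf : ContDiffAt 𝕜 2 f x) (v w : E) :
    fderiv 𝕜 (fun y => fderiv 𝕜 f y w) x v = fderiv 𝕜 (fun y => fderiv 𝕜 f y v) x w := by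
  have hd : DifferentiableAt 𝕜 (fderiv 𝕜 f) x :=
    (hf.fderiv_right (m := 1) le_rfl).differentiableAt one_ne_zero
  rw [fderiv_clm_apply hd (differentiableAt_const w),
    fderiv_clm_apply hd (differentiableAt_const v)]
  simpa using hf.isSymmSndFDerivAt (by simp) v w

theorem ContDiffAt.fderiv_fderiv_fderiv_apply_comm (hf : ContDiffAt 𝕜 3 f x) (u v w : E) :
    fderiv 𝕜 (fun y => fderiv 𝕜 (fun z => fderiv 𝕜 f z u) y v) x w
      = fderiv 𝕜 (fun y => fderiv 𝕜 (fun z => fderiv 𝕜 f z v) y w) x u := by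
  have hcomm : (fun y => fderiv 𝕜 (fun z => fderiv 𝕜 f z u) y v)
      =ᶠ[𝓝 x] fun y => fderiv 𝕜 (fun z => fderiv 𝕜 f z v) y u := by
    filter_upwards [hf.eventually (by simp)] with y hy
    exact (hy.of_le (by norm_num)).fderiv_fderiv_apply_comm v u
  rw [hcomm.fderiv_eq]
  exact (hf.contDiffAt_fderiv_apply (n := 2) v).fderiv_fderiv_apply_comm w u

end Symmetry

noncomputable def scaledLaplacian {d : ℕ} (μ : ℝ) (f : (Fin d → ℝ) × ℝ → ℝ) :
    (Fin d → ℝ) × ℝ → ℝ :=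
  fun p => μ * ∑ i, pdX i (pdX i f) p + pdZ (pdZ f) p

section PartialDerivatives

variable {d : ℕ} {f g : (Fin d → ℝ) × ℝ → ℝ} {p : (Fin d → ℝ) × ℝ}

theorem Filter.EventuallyEq.pdX_eq (h : f =ᶠ[𝓝 p] g) (i : Fin d) : pdX i f p = pdX i g p := by
  simp only [pdX, h.fderiv_eq]

theorem Filter.EventuallyEq.pdZ_eq (h : f =ᶠ[𝓝 p] g) : pdZ f p = pdZ g p := by
  simp only [pdZ, h.fderiv_eq]

theorem pdZ_sum_add {W : Fin d → (Fin d → ℝ) × ℝ → ℝ} (hW : ∀ j, DifferentiableAt ℝ (W j) p)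
    (hf : DifferentiableAt ℝ f p) :
    pdZ (fun q => ∑ j, W j q + f q) p = ∑ j, pdZ (W j) p + pdZ f p := by
  unfold pdZ
  rw [fderiv_fun_add_apply (DifferentiableAt.fun_sum fun j _ => hW j) hf,
    fderiv_fun_sum_apply fun j _ => hW j]

theorem pdZ_scaledLaplacian {μ : ℝ} (hf : ContDiffAt ℝ 3 f p) :
    pdZ (scaledLaplacian μ f) p = μ * ∑ i, pdZ (pdX i (pdX i f)) p + pdZ (pdZ (pdZ f)) p := by
  have hf₂ := hf.differentiableAt_fderiv_fderiv_apply
  unfold scaledLaplacian pdZ pdX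
  simp (disch := fun_prop) only [fderiv_fun_add_apply, fderiv_const_mul_apply,
    fderiv_fun_sum_apply]

end PartialDerivatives

section Corrector

variable {d : ℕ} {ζ : (Fin d → ℝ) → ℝ} {Φ : (Fin d → ℝ) × ℝ → ℝ} {p : (Fin d → ℝ) × ℝ}
  {μ : ℝ}

theorem fderiv_corrector_apply (hζ : DifferentiableAt ℝ ζ p.1) (hΦ : ContDiffAt ℝ 2 Φ p)
    (v : (Fin d → ℝ) × ℝ) :
    fderiv ℝ (fun x => (x.2 + 1) * ζ x.1 * pdZ Φ x) p v
      = v.2 * ζ p.1 * pdZ Φ p + (p.2 + 1) * fderiv ℝ ζ p.1 v.1 * pdZ Φ p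
        + (p.2 + 1) * ζ p.1 * fderiv ℝ (pdZ Φ) p v := by
  have hΦ' : DifferentiableAt ℝ (pdZ Φ) p := hΦ.differentiableAt_fderiv_apply _
  simp (disch := fun_prop) only [fderiv_fun_mul_apply, fderiv_add_const, fderiv_snd_apply,
    fderiv_comp_fst_apply]
  ring

/-- Groups the `i`-th horizontal term of the divergence with the `i`-th summand of the vertical
component of `Q₁∇^μΦ`. -/
theorem corrector_identity_horizontal (hμ : 0 ≤ μ) (hζ : ContDiff ℝ 2 ζ)
    (hΦ : ContDiffAt ℝ 3 Φ p) (i : Fin d) :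
    √μ * pdX i (fun q => ζ q.1 * (√μ * pdX i Φ q)
        + (-√μ * (q.2 + 1) * fderiv ℝ ζ q.1 (Pi.single i 1)) * pdZ Φ q) p
      + pdZ (fun q => (-√μ * (q.2 + 1) * fderiv ℝ ζ q.1 (Pi.single i 1)) * (√μ * pdX i Φ q)) p
      + μ * pdX i (pdX i (fun q => (q.2 + 1) * ζ q.1 * pdZ Φ q)) p
      = ζ p.1 * (μ * pdX i (pdX i Φ) p)
        + (p.2 + 1) * ζ p.1 * (μ * pdZ (pdX i (pdX i Φ)) p) := by
  have hζ₀ : Differentiable ℝ ζ := hζ.differentiable (by norm_num)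
  have hζ₁ : Differentiable ℝ (fderiv ℝ ζ) :=
    (hζ.fderiv_right (m := 1) le_rfl).differentiable one_ne_zero
  have hΦ₂ : ContDiffAt ℝ 2 Φ p := hΦ.of_le (by norm_num)
  have hΦ₁ := hΦ₂.differentiableAt_fderiv_apply
  have hΦ₀ := hΦ.differentiableAt_fderiv_fderiv_apply
  have hpdX : pdX i (fun q => (q.2 + 1) * ζ q.1 * pdZ Φ q) =ᶠ[𝓝 p] fun q =>
      (q.2 + 1) * fderiv ℝ ζ q.1 (Pi.single i 1) * pdZ Φ q
        + (q.2 + 1) * ζ q.1 * pdX i (pdZ Φ) q := by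
    filter_upwards [hΦ.eventually (by simp)] with q hq
    exact (fderiv_corrector_apply (hζ₀ q.1) (hq.of_le (by norm_num)) _).trans (by simp [pdX])
  rw [hpdX.pdX_eq]
  unfold pdX pdZ
  simp (disch := fun_prop) only [fderiv_fun_add_apply, fderiv_fun_mul_apply, fderiv_add_const,
    fderiv_snd_apply, fderiv_comp_fst_apply, fderiv_fderiv_comp_fst_apply, fderiv_const_apply]
  rw [hΦ₂.fderiv_fderiv_apply_comm (0, 1), hΦ.fderiv_fderiv_fderiv_apply_comm (0, 1)]
  simp only [map_zero, zero_apply]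
  have hμ' : √μ * √μ = μ := Real.mul_self_sqrt hμ
  generalize √μ = s at hμ'
  subst hμ'
  ring

theorem corrector_identity_vertical (hζ : Differentiable ℝ ζ) (hΦ : ContDiffAt ℝ 3 Φ p) :
    pdZ (fun q => -ζ q.1 * pdZ Φ q) p + pdZ (pdZ (fun q => (q.2 + 1) * ζ q.1 * pdZ Φ q)) p
      = ζ p.1 * pdZ (pdZ Φ) p + (p.2 + 1) * ζ p.1 * pdZ (pdZ (pdZ Φ)) p := by
  have hΦ₁ := (hΦ.of_le (by norm_num)).differentiableAt_fderiv_apply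
  have hΦ₀ := hΦ.differentiableAt_fderiv_fderiv_apply
  have hpdZ : pdZ (fun q => (q.2 + 1) * ζ q.1 * pdZ Φ q)
      =ᶠ[𝓝 p] fun q => ζ q.1 * pdZ Φ q + (q.2 + 1) * ζ q.1 * pdZ (pdZ Φ) q := by
    filter_upwards [hΦ.eventually (by simp)] with q hq
    exact (fderiv_corrector_apply (hζ q.1) (hq.of_le (by norm_num)) _).trans (by simp [pdZ])
  rw [hpdZ.pdZ_eq]
  unfold pdZ
  simp (disch := fun_prop) only [fderiv_fun_add_apply, fderiv_fun_mul_apply, fderiv_fun_neg_apply,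
    fderiv_add_const, fderiv_snd_apply, fderiv_comp_fst_apply, map_zero]
  ring

end Corrector

theorem corrector_identity_general (d : ℕ) (μ₂ : ℝ) (hμ₂ : 0 < μ₂)
    (ζ : (Fin d → ℝ) → ℝ) (hζ : ContDiff ℝ 2 ζ)
    (z₁ z₂ : ℝ) (Φ : (Fin d → ℝ) × ℝ → ℝ)
    (hΦ : ContDiffOn ℝ 3 Φ ((Set.univ : Set (Fin d → ℝ)) ×ˢ Set.Ioo z₁ z₂))
    (hlap : ∀ p : (Fin d → ℝ) × ℝ, p.2 ∈ Set.Ioo z₁ z₂ →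
      μ₂ * (∑ i, pdX i (pdX i Φ) p) + pdZ (pdZ Φ) p = 0) :
    ∀ p : (Fin d → ℝ) × ℝ, p.2 ∈ Set.Ioo z₁ z₂ →
      (∑ i, Real.sqrt μ₂ * pdX i (fun q =>
            ζ q.1 * (Real.sqrt μ₂ * pdX i Φ q)
              + (-(Real.sqrt μ₂) * (q.2 + 1) * fderiv ℝ ζ q.1 (Pi.single i 1))
                * pdZ Φ q) p)
        + pdZ (fun q =>
            (∑ j, (-(Real.sqrt μ₂) * (q.2 + 1) * fderiv ℝ ζ q.1 (Pi.single j 1))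
                * (Real.sqrt μ₂ * pdX j Φ q))
              + (-(ζ q.1)) * pdZ Φ q) p
      = -(μ₂ * (∑ i, pdX i (pdX i (fun q => (q.2 + 1) * ζ q.1 * pdZ Φ q)) p)
          + pdZ (pdZ (fun q => (q.2 + 1) * ζ q.1 * pdZ Φ q)) p) := by
  intro p hp
  have hnhds : {q : (Fin d → ℝ) × ℝ | q.2 ∈ Ioo z₁ z₂} ∈ 𝓝 p :=
    continuous_snd.continuousAt.preimage_mem_nhds (Ioo_mem_nhds hp.1 hp.2)
  have hΦp : ContDiffAt ℝ 3 Φ p := hΦ.contDiffAt (by rw [univ_prod]; exact hnhds)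
  have hlapZ : pdZ (scaledLaplacian μ₂ Φ) p = 0 :=
    (eventuallyEq_of_mem hnhds hlap).pdZ_eq.trans (by simp [pdZ])
  rw [pdZ_scaledLaplacian hΦp] at hlapZ
  have hζ₀ : Differentiable ℝ ζ := hζ.differentiable (by norm_num)
  have hΦ₁ := (hΦp.of_le (by norm_num)).differentiableAt_fderiv_apply
  rw [pdZ_sum_add (fun j => by unfold pdX; fun_prop) (by unfold pdZ; fun_prop)]
  have hsum := Fintype.sum_congr _ _ (corrector_identity_horizontal hμ₂.le hζ hΦp)
  simp only [Finset.sum_add_distrib, ← Finset.mul_sum] at hsum ⊢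
  linear_combination hsum + corrector_identity_vertical hζ₀ hΦp
    + ζ p.1 * hlap p hp + (p.2 + 1) * ζ p.1 * hlapZ

/-- If `ζ` is C², `Φ` is C³ on `ℝ^d × I` (`I` an open interval) and satisfies
`μ₂Δ_XΦ + ∂_z²Φ = 0` there, then pointwise on `ℝ^d × I` one has
`∇^{μ₂}_{X,z}·(Q₁∇^{μ₂}_{X,z}Φ) = -(μ₂Δ_X + ∂_z²)[(z+1)ζ(X)∂_zΦ]`, where `Q₁` is the
matrix with upper-left block `ζ I`, off-diagonal blocks `-√μ₂(z+1)∇ζ` and lower-right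
entry `-ζ`. -/
theorem corrector_identity (d : ℕ) (hd : 1 ≤ d) (μ₂ : ℝ) (hμ₂ : 0 < μ₂)
    (ζ : (Fin d → ℝ) → ℝ) (hζ : ContDiff ℝ 2 ζ)
    (z₁ z₂ : ℝ) (Φ : (Fin d → ℝ) × ℝ → ℝ)
    (hΦ : ContDiffOn ℝ 3 Φ ((Set.univ : Set (Fin d → ℝ)) ×ˢ Set.Ioo z₁ z₂))
    (hlap : ∀ p : (Fin d → ℝ) × ℝ, p.2 ∈ Set.Ioo z₁ z₂ →
      μ₂ * (∑ i, pdX i (pdX i Φ) p) + pdZ (pdZ Φ) p = 0) :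
    ∀ p : (Fin d → ℝ) × ℝ, p.2 ∈ Set.Ioo z₁ z₂ →
      (∑ i, Real.sqrt μ₂ * pdX i (fun q =>
            ζ q.1 * (Real.sqrt μ₂ * pdX i Φ q)
              + (-(Real.sqrt μ₂) * (q.2 + 1) * fderiv ℝ ζ q.1 (Pi.single i 1))
                * pdZ Φ q) p)
        + pdZ (fun q =>
            (∑ j, (-(Real.sqrt μ₂) * (q.2 + 1) * fderiv ℝ ζ q.1 (Pi.single j 1))
                * (Real.sqrt μ₂ * pdX j Φ q))
              + (-(ζ q.1)) * pdZ Φ q) p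
      = -(μ₂ * (∑ i, pdX i (pdX i (fun q => (q.2 + 1) * ζ q.1 * pdZ Φ q)) p)
          + pdZ (pdZ (fun q => (q.2 + 1) * ζ q.1 * pdZ Φ q)) p) :=
  corrector_identity_general d μ₂ hμ₂ ζ hζ z₁ z₂ Φ hΦ hlap
end
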